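/- arXiv:1505.01901 — 2 statements merged into one kernel-verified Lean document; each statement's English description precedes it below -/
import Mathlib

section
/- Let I_n = [n!, (n+1)!) and 𝓘(A) = ⋃_{n ∈ A} I_n. For any infinite A ⊆ ℕ, any set D ⊆ ℕ of positive lower density intersects I_n for all but finitely many n. Consequently, if A is noncomputable, then the partial computability bound α(𝓘(A)) = 0. -/
open Filter Topology
open scoped symmDiff Classical

/-- ρ_n(A): the density of A below n. -/
noncomputable def partialDensity (A : Set ℕ) (n : ℕ) : ℝ :=
  ((Finset.range n).filter (fun k => k ∈ A)).card / n

/-- Lower density ρ̲(A). -/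
noncomputable def lowerDensity (A : Set ℕ) : ℝ := liminf (partialDensity A) atTop

/-- Upper density ρ̄(A). -/
noncomputable def upperDensity (A : Set ℕ) : ℝ := limsup (partialDensity A) atTop

/-- A has density r. -/
def HasDensity (A : Set ℕ) (r : ℝ) : Prop := Tendsto (partialDensity A) atTop (𝓝 r)

/-- A set of naturals is computable. -/
def IsComputableSet (A : Set ℕ) : Prop := ComputablePred (· ∈ A)

/-- A is coarsely computable at density r. -/
def CoarselyComputableAt (A : Set ℕ) (r : ℝ) : Prop :=
  ∃ C : Set ℕ, IsComputableSet C ∧ r ≤ lowerDensity {n | n ∈ A ↔ n ∈ C}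

/-- γ(A), the coarse computability bound. -/
noncomputable def gammaBound (A : Set ℕ) : ℝ := sSup {r | CoarselyComputableAt A r}

/-- A is partially computable at density r. -/
def PartiallyComputableAt (A : Set ℕ) (r : ℝ) : Prop :=
  ∃ φ : ℕ →. Bool, Partrec φ ∧ (∀ n b, b ∈ φ n → (b = true ↔ n ∈ A)) ∧
    r ≤ lowerDensity φ.Dom

/-- α(A), the partial computability bound. -/
noncomputable def alphaBound (A : Set ℕ) : ℝ := sSup {r | PartiallyComputableAt A r}

/-- A is generically computable. -/
def GenericallyComputable (A : Set ℕ) : Prop := PartiallyComputableAt A 1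

/-- A is coarsely computable. -/
def CoarselyComputable (A : Set ℕ) : Prop :=
  ∃ C : Set ℕ, IsComputableSet C ∧ HasDensity (A ∆ C) 0

/-- 𝓘(A) = ⋃_{n ∈ A} [n!, (n+1)!). -/
def calI (A : Set ℕ) : Set ℕ := ⋃ n ∈ A, Set.Ico (Nat.factorial n) (Nat.factorial (n + 1))

/-! A set `D` that misses the block `[n!, (n+1)!)` has at most `n!` elements below `(n+1)!`,
so its density there is at most `1/(n+1)`; missing infinitely many blocks therefore forces
lower density `0`.

If a partial computable `φ` agrees with `𝓘(A)` on a domain of positive lower density, then for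
almost all `n` it converges somewhere in `[n!, (n+1)!)`, and every such answer is the answer to
`n ∈ A`. Dovetailing the evaluation of `φ` over the block decides `n ∈ A` for all large `n`,
and a finite table handles the rest, so `A` would be computable. -/

open Nat.Partrec (Code)

theorem Primrec.nat_factorial : Primrec Nat.factorial :=
  (Primrec.nat_rec₁ 1
      (Primrec.nat_mul.comp (Primrec.succ.comp Primrec.fst) Primrec.snd).to₂).of_eq fun n => by
    induction n <;> simp_all [Nat.factorial_succ]

theorem Partrec.exists_dovetail {α σ : Type*} [Primcodable α] [Primcodable σ] {f : ℕ →. σ}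
    (hf : Partrec f) {R : α → ℕ → Prop} (hR : PrimrecRel R) :
    ∃ g : α →. σ, Partrec g ∧ (∀ a y, y ∈ g a → ∃ k, R a k ∧ y ∈ f k) ∧
      ∀ a k, R a k → (f k).Dom → (g a).Dom := by
  have hf' : Nat.Partrec fun n => (f n).map Encodable.encode :=
    Nat.Partrec.of_eq hf fun n => by simp [Encodable.decode]
  obtain ⟨c, hc⟩ := Code.exists_code.1 hf'
  -- `s` encodes a pair (fuel, candidate input)
  let step (a : α) (s : ℕ) : Option σ :=
    if R a s.unpair.2 then (c.evaln s.unpair.1 s.unpair.2).bind Encodable.decode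
    else Option.none
  have hstep : Computable₂ step := by
    have hk : Primrec fun p : α × ℕ => p.2.unpair.2 :=
      Primrec.snd.comp (Primrec.unpair.comp Primrec.snd)
    have hfuel : Primrec fun p : α × ℕ => p.2.unpair.1 :=
      Primrec.fst.comp (Primrec.unpair.comp Primrec.snd)
    have heval : Primrec fun p : α × ℕ => c.evaln p.2.unpair.1 p.2.unpair.2 :=
      Code.primrec_evaln.comp ((hfuel.pair (Primrec.const c)).pair hk)
    exact (Primrec.ite (hR.comp Primrec.fst hk)
      (Primrec.option_bind heval (Primrec.decode.comp Primrec.snd).to₂)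
      (Primrec.const Option.none)).to_comp.to₂
  have step_sound : ∀ a s y, y ∈ step a s → R a s.unpair.2 ∧ y ∈ f s.unpair.2 := by
    intro a s y hy
    simp only [step] at hy
    split_ifs at hy with hR
    · obtain ⟨v, hv, hdec⟩ := Option.bind_eq_some_iff.mp hy
      have hv' := Code.evaln_sound hv
      rw [hc] at hv'
      obtain ⟨y', hy', rfl⟩ := Part.mem_map_iff _ |>.mp hv'
      rw [Encodable.encodek, Option.some_inj] at hdec
      exact ⟨hR, hdec ▸ hy'⟩
    · cases hy
  refine ⟨fun a => Nat.rfindOpt (step a), Partrec.rfindOpt hstep, fun a y hy => ?_,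
    fun a k hR hk => ?_⟩
  · obtain ⟨s, hs⟩ := Nat.rfindOpt_spec hy
    exact ⟨_, step_sound a s y hs⟩
  · obtain ⟨y, hy⟩ := Part.dom_iff_mem.mp hk
    have : Encodable.encode y ∈ c.eval k := by rw [hc]; exact Part.mem_map _ hy
    obtain ⟨fuel, hfuel⟩ := Code.evaln_complete.mp this
    refine Nat.rfindOpt_dom.2 ⟨Nat.pair fuel k, y, ?_⟩
    simp [step, hR, Option.mem_def.mp hfuel, Encodable.encodek]

theorem ComputablePred.of_eventually_mem_partrec {p : ℕ → Prop} {g : ℕ →. Bool}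
    (hg : Partrec g) (h : ∀ᶠ n in atTop, decide (p n) ∈ g n) : ComputablePred p := by
  obtain ⟨N, hN⟩ := eventually_atTop.mp h
  let table : List Bool := (List.range N).map fun n => decide (p n)
  have hcond : Partrec fun n => cond (decide (n < N)) (Part.some (table.getD n false)) (g n) :=
    Partrec.cond (Primrec.nat_lt.comp Primrec.id (Primrec.const N)).decide.to_comp
      ((Primrec.list_getD false).comp (Primrec.const table) Primrec.id).to_comp hg
  refine ⟨inferInstance, hcond.of_eq fun n => ?_⟩
  by_cases hn : n < N
  · simp [hn, table, List.getD_eq_getElem?_getD]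
  · simpa [hn] using Part.eq_some_iff.2 (hN n (not_lt.mp hn))

theorem partialDensity_le_of_disjoint_Ico {D : Set ℕ} {m M : ℕ}
    (h : Disjoint D (Set.Ico m M)) : partialDensity D M ≤ m / M := by
  have hsub : (Finset.range M).filter (· ∈ D) ⊆ Finset.range m := by
    intro k hk
    simp only [Finset.mem_filter, Finset.mem_range] at hk ⊢
    by_contra! hmk
    exact Set.disjoint_left.mp h hk.2 ⟨hmk, hk.1⟩
  unfold partialDensity
  gcongr
  simpa using Finset.card_le_card hsub

theorem partialDensity_factorial_succ_le {D : Set ℕ} {n : ℕ}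
    (h : Disjoint D (Set.Ico n.factorial (n + 1).factorial)) :
    partialDensity D (n + 1).factorial ≤ 1 / (n + 1) := by
  refine (partialDensity_le_of_disjoint_Ico h).trans_eq ?_
  have : (n.factorial : ℝ) ≠ 0 := by positivity
  rw [Nat.factorial_succ]
  push_cast
  field_simp

theorem lowerDensity_le_of_frequently_le {D : Set ℕ} {ε : ℝ}
    (h : ∃ᶠ n in atTop, partialDensity D n ≤ ε) : lowerDensity D ≤ ε :=
  liminf_le_of_frequently_le h
    (isBoundedUnder_of ⟨0, fun n => by unfold partialDensity; positivity⟩)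

theorem tendsto_factorial_succ_atTop : Tendsto (fun n => (n + 1).factorial) atTop atTop :=
  tendsto_atTop_mono (fun n => n.le_succ.trans (Nat.self_le_factorial _)) tendsto_id

theorem eventually_inter_Ico_factorial_nonempty {D : Set ℕ} (hD : 0 < lowerDensity D) :
    ∀ᶠ n in atTop, (D ∩ Set.Ico n.factorial (n + 1).factorial).Nonempty := by
  by_contra hmiss
  simp only [not_eventually, Set.not_nonempty_iff_eq_empty, ← Set.disjoint_iff_inter_eq_empty]
    at hmiss
  refine hD.not_ge <| le_of_forall_gt_imp_ge_of_dense fun ε hε =>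
    lowerDensity_le_of_frequently_le ?_
  have hsmall : ∀ᶠ n : ℕ in atTop, 1 / ((n : ℝ) + 1) ≤ ε :=
    tendsto_one_div_add_atTop_nhds_zero_nat.eventually (ge_mem_nhds hε)
  refine tendsto_factorial_succ_atTop.frequently ((hmiss.and_eventually hsmall).mono ?_)
  exact fun n ⟨hdisj, hn⟩ => (partialDensity_factorial_succ_le hdisj).trans hn

theorem mem_calI_iff_of_mem_Ico (A : Set ℕ) {n k : ℕ}
    (hk : k ∈ Set.Ico n.factorial (n + 1).factorial) : k ∈ calI A ↔ n ∈ A := by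
  refine ⟨fun hkA => ?_, fun hn => Set.mem_biUnion hn hk⟩
  obtain ⟨m, hm, hkm⟩ := Set.mem_iUnion₂.mp hkA
  obtain rfl : m = n := by
    obtain ⟨hnk, hkn⟩ := hk
    obtain ⟨hmk, hkm⟩ := hkm
    by_contra hne
    rcases Nat.lt_or_gt_of_ne hne with hlt | hlt
    · have : (m + 1).factorial ≤ n.factorial := Nat.factorial_le hlt
      omega
    · have : (n + 1).factorial ≤ m.factorial := Nat.factorial_le hlt
      omega
  exact hm

theorem primrecRel_mem_Ico_factorial :
    PrimrecRel fun n k : ℕ => k ∈ Set.Ico n.factorial (n + 1).factorial :=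
  (Primrec.nat_le.comp (Primrec.nat_factorial.comp Primrec.fst) Primrec.snd).and
    (Primrec.nat_lt.comp Primrec.snd
      (Primrec.nat_factorial.comp (Primrec.succ.comp Primrec.fst)))

theorem isComputableSet_of_partrec_calI {A : Set ℕ} {φ : ℕ →. Bool} (hφ : Partrec φ)
    (hA : ∀ k b, b ∈ φ k → (b = true ↔ k ∈ calI A))
    (hdom : ∀ᶠ n in atTop, (φ.Dom ∩ Set.Ico n.factorial (n + 1).factorial).Nonempty) :
    IsComputableSet A := by
  obtain ⟨ψ, hψ, hψ_sound, hψ_dom⟩ := hφ.exists_dovetail primrecRel_mem_Ico_factorial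
  refine ComputablePred.of_eventually_mem_partrec hψ (hdom.mono fun n ⟨k, hkφ, hk⟩ => ?_)
  obtain ⟨b, hb⟩ := Part.dom_iff_mem.mp (hψ_dom n k hk hkφ)
  obtain ⟨k', hk', hbk'⟩ := hψ_sound n b hb
  have hbA : b = true ↔ n ∈ A := (hA k' b hbk').trans (mem_calI_iff_of_mem_Ico A hk')
  rwa [Bool.eq_iff_iff.mpr (decide_eq_true_iff.trans hbA.symm)]

theorem isComputableSet_of_partiallyComputableAt_calI {A : Set ℕ} {r : ℝ}
    (h : PartiallyComputableAt (calI A) r) (hr : 0 < r) : IsComputableSet A := by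
  obtain ⟨φ, hφ, hA, hdens⟩ := h
  exact isComputableSet_of_partrec_calI hφ hA
    (eventually_inter_Ico_factorial_nonempty (hr.trans_le hdens))

theorem partiallyComputableAt_zero (A : Set ℕ) : PartiallyComputableAt A 0 := by
  refine ⟨fun _ => Part.none, Partrec.none, fun n b hb => (Part.notMem_none b hb).elim, ?_⟩
  have hempty : partialDensity ∅ = fun _ => 0 := funext fun n => by simp [partialDensity]
  simp [lowerDensity, hempty]

theorem alphaBound_calI_eq_zero :
    (∀ D : Set ℕ, 0 < lowerDensity D →
      ∀ᶠ n in Filter.atTop, (D ∩ Set.Ico (Nat.factorial n) (Nat.factorial (n + 1))).Nonempty) ∧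
    (∀ A : Set ℕ, ¬ IsComputableSet A → alphaBound (calI A) = 0) := by
  refine ⟨fun D => eventually_inter_Ico_factorial_nonempty, fun A hA => ?_⟩
  refine IsGreatest.csSup_eq ⟨partiallyComputableAt_zero _, fun r hr => ?_⟩
  by_contra! hr_pos
  exact hA (isComputableSet_of_partiallyComputableAt_calI hr hr_pos)
end

section
/- Let A be a 1-generic set, r ∈ [0,1], and suppose B ≤_T A and B is partially computable at density r. Then B is coarsely computable at density r. -/
open Filter Topology
open scoped symmDiff Classical

/-- Codes for oracle (relative) partial computable functions. -/
inductive OracleCode : Type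
  | zero : OracleCode
  | succ : OracleCode
  | left : OracleCode
  | right : OracleCode
  | oracle : OracleCode
  | pair : OracleCode → OracleCode → OracleCode
  | comp : OracleCode → OracleCode → OracleCode
  | prec : OracleCode → OracleCode → OracleCode
  | rfind' : OracleCode → OracleCode

/-- Evaluation of an oracle code relative to a (total) oracle g : ℕ → ℕ. -/
def OracleCode.eval (g : ℕ → ℕ) : OracleCode → ℕ →. ℕ
  | .zero => fun _ => Part.some 0
  | .succ => fun n => Part.some (n + 1)
  | .left => fun n => Part.some n.unpair.1
  | .right => fun n => Part.some n.unpair.2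
  | .oracle => fun n => Part.some (g n)
  | .pair cf cg => fun n => Nat.pair <$> OracleCode.eval g cf n <*> OracleCode.eval g cg n
  | .comp cf cg => fun n => OracleCode.eval g cg n >>= OracleCode.eval g cf
  | .prec cf cg =>
    Nat.unpaired fun a n =>
      n.rec (OracleCode.eval g cf a) fun y IH => do
        let i ← IH
        OracleCode.eval g cg (Nat.pair a (Nat.pair y i))
  | .rfind' cf =>
    Nat.unpaired fun a m =>
      (Nat.rfind fun n =>
        (fun x => x = 0) <$> OracleCode.eval g cf (Nat.pair a (n + m))).map (· + m)

/-- A numerical code for oracle codes. -/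
def OracleCode.encode : OracleCode → ℕ
  | .zero => 0
  | .succ => 1
  | .left => 2
  | .right => 3
  | .oracle => 4
  | .pair cf cg => 4 * Nat.pair cf.encode cg.encode + 5
  | .comp cf cg => 4 * Nat.pair cf.encode cg.encode + 6
  | .prec cf cg => 4 * Nat.pair cf.encode cg.encode + 7
  | .rfind' cf => 4 * Nat.pair cf.encode cf.encode + 8

/-- The characteristic function of a set of naturals. -/
noncomputable def chi (A : Set ℕ) : ℕ → ℕ := fun n => if n ∈ A then 1 else 0

/-- Turing reducibility between sets of naturals. -/
def TuringReducibleSet (B A : Set ℕ) : Prop :=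
  ∃ c : OracleCode, ∀ n, OracleCode.eval (chi A) c n = Part.some (chi B n)

/-- The Turing jump of a set of naturals. -/
def turingJump (A : Set ℕ) : Set ℕ :=
  {e | ∃ c : OracleCode, c.encode = e ∧ (OracleCode.eval (chi A) c e).Dom}

/-- A set is low if its jump is Turing reducible to the jump of ∅. -/
def IsLow (A : Set ℕ) : Prop := TuringReducibleSet (turingJump A) (turingJump ∅)

/-- A (viewed as an element of 2^ω) extends the finite binary string σ. -/
def ExtendsString (A : Set ℕ) (σ : List Bool) : Prop :=
  ∀ i : ℕ, ∀ h : i < σ.length, (σ.get ⟨i, h⟩ = true ↔ i ∈ A)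

/-- A meets the string set S: A extends some string in S. -/
def MeetsStrings (A : Set ℕ) (S : Set (List Bool)) : Prop := ∃ σ ∈ S, ExtendsString A σ

/-- A avoids S: A extends a string with no extension in S. -/
def AvoidsStrings (A : Set ℕ) (S : Set (List Bool)) : Prop :=
  ∃ σ : List Bool, ExtendsString A σ ∧ ∀ τ ∈ S, ¬ σ <+: τ

/-- A is 1-generic: A meets or avoids every c.e. set of binary strings. -/
def OneGeneric (A : Set ℕ) : Prop :=
  ∀ S : Set (List Bool), REPred (· ∈ S) → MeetsStrings A S ∨ AvoidsStrings A S

/-!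
Let `Φ` reduce `B` to `A` and let `φ` be a partial computable function agreeing with `B` on its
domain. The strings `σ` for which `Φ^σ(n)` converges to a value other than `φ(n)` for some `n`
form a c.e. set, and `A` meets none of them because `Φ^A = B`. By 1-genericity some initial
segment `σ₀` of `A` has no extension in this set. By the use principle `Φ^τ(n)` converges for some
extension `τ` of `σ₀`, and a dovetailed search finds such a `τ` computably in `n`. The resulting
computable guess at `B(n)` equals `φ(n)` wherever `φ(n)` converges, hence is correct on a set of
lower density at least `r`.
-/

namespace OracleCode

def evalPartial (O : ℕ →. ℕ) : OracleCode → ℕ →. ℕ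
  | .zero => fun _ => Part.some 0
  | .succ => fun n => Part.some (n + 1)
  | .left => fun n => Part.some n.unpair.1
  | .right => fun n => Part.some n.unpair.2
  | .oracle => O
  | .pair cf cg => fun n => Nat.pair <$> evalPartial O cf n <*> evalPartial O cg n
  | .comp cf cg => fun n => evalPartial O cg n >>= evalPartial O cf
  | .prec cf cg =>
    Nat.unpaired fun a n =>
      n.rec (evalPartial O cf a) fun y IH => do
        let i ← IH
        evalPartial O cg (Nat.pair a (Nat.pair y i))
  | .rfind' cf =>
    Nat.unpaired fun a m =>
      (Nat.rfind fun n =>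
        (fun x => x = 0) <$> evalPartial O cf (Nat.pair a (n + m))).map (· + m)

theorem eval_eq_evalPartial (g : ℕ → ℕ) (c : OracleCode) :
    c.eval g = c.evalPartial fun n => Part.some (g n) := by
  induction c <;> simp_all [eval, evalPartial] <;> rfl

/-- The use principle: a convergent computation queries the oracle only finitely often, so it
converges along any filter of oracles that eventually answers each query correctly. -/
theorem eventually_mem_evalPartial {ι : Type*} {l : Filter ι} {O : ℕ →. ℕ} {Os : ι → ℕ →. ℕ}
    (hO : ∀ k x, x ∈ O k → ∀ᶠ i in l, x ∈ Os i k) (c : OracleCode) :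
    ∀ n x, x ∈ c.evalPartial O n → ∀ᶠ i in l, x ∈ c.evalPartial (Os i) n := by
  induction c with
  | zero | succ | left | right => exact fun n x hx => Eventually.of_forall fun _ => hx
  | oracle => exact hO
  | pair cf cg ihf ihg =>
    intro n x hx
    simp only [evalPartial, Seq.seq, Part.map_eq_map, Part.mem_bind_iff,
      Part.mem_map_iff] at hx ⊢
    obtain ⟨_, ⟨a, ha, rfl⟩, b, hb, rfl⟩ := hx
    filter_upwards [ihf n a ha, ihg n b hb] with i ha hb
    exact ⟨_, ⟨a, ha, rfl⟩, b, hb, rfl⟩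
  | comp cf cg ihf ihg =>
    intro n x hx
    obtain ⟨a, ha, hx⟩ := Part.mem_bind_iff.1 hx
    filter_upwards [ihg n a ha, ihf a x hx] with i ha hx
    exact Part.mem_bind_iff.2 ⟨a, ha, hx⟩
  | prec cf cg ihf ihg =>
    intro n
    simp only [evalPartial, Nat.unpaired]
    induction n.unpair.2 with
    | zero => exact ihf _
    | succ k ih =>
      intro x hx
      obtain ⟨j, hj, hx⟩ := Part.mem_bind_iff.1 hx
      filter_upwards [ih j hj, ihg _ x hx] with i hj hx
      exact Part.mem_bind_iff.2 ⟨j, hj, hx⟩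
  | rfind' cf ihf =>
    intro n x hx
    simp only [evalPartial, Nat.unpaired, Part.map_eq_map, Part.mem_map_iff] at hx ⊢
    obtain ⟨k, hk, rfl⟩ := hx
    obtain ⟨hk, hlt⟩ := Nat.mem_rfind.1 hk
    simp only [Part.mem_map_iff] at hk hlt
    obtain ⟨a, ha, hak⟩ := hk
    choose! b hb hbj using fun j (hj : j < k) => hlt hj
    have hbefore : ∀ᶠ i in l, ∀ j ∈ Finset.range k,
        b j ∈ cf.evalPartial (Os i) (Nat.pair n.unpair.1 (j + n.unpair.2)) :=
      (Finset.eventually_all _).2 fun j hj => ihf _ _ (hb j (Finset.mem_range.1 hj))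
    filter_upwards [ihf _ a ha, hbefore] with i ha hbefore
    exact ⟨k, Nat.mem_rfind.2 ⟨(Part.mem_map_iff _).2 ⟨a, ha, hak⟩, fun {j} hj =>
      (Part.mem_map_iff _).2 ⟨b j, hbefore j (Finset.mem_range.2 hj), hbj j hj⟩⟩, rfl⟩

theorem evalPartial_mono {O O' : ℕ →. ℕ} (hO : ∀ k x, x ∈ O k → x ∈ O' k) (c : OracleCode) :
    ∀ n x, x ∈ c.evalPartial O n → x ∈ c.evalPartial O' n := fun n x hx =>
  eventually_pure.1 <| eventually_mem_evalPartial (l := pure ()) (Os := fun _ => O')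
    (fun k x hx => eventually_pure.2 (hO k x hx)) c n x hx


theorem evalPartial_partrec {α : Type*} [Primcodable α] {O : α → ℕ →. ℕ} (hO : Partrec₂ O)
    (c : OracleCode) : Partrec₂ fun a n => c.evalPartial (O a) n := by
  have hpair : Computable₂ Nat.pair := Primrec₂.natPair.to_comp
  have hunpair₁ : Computable fun p : α × ℕ => p.2.unpair.1 :=
    (Computable.fst.comp Computable.unpair).comp Computable.snd
  have hunpair₂ : Computable fun p : α × ℕ => p.2.unpair.2 :=
    (Computable.snd.comp Computable.unpair).comp Computable.snd
  induction c with
  | zero => exact (Computable.const 0).partrec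
  | succ => exact (Computable.succ.comp Computable.snd).partrec
  | left => exact hunpair₁.partrec
  | right => exact hunpair₂.partrec
  | oracle => exact hO
  | pair cf cg ihf ihg =>
    have inner : Partrec₂ fun (p : α × ℕ) (x : ℕ) =>
        (cg.evalPartial (O p.1) p.2).map (Nat.pair x) :=
      (ihg.comp (Computable.fst.comp Computable.fst) (Computable.snd.comp Computable.fst)).map
        (hpair.comp (Computable.snd.comp Computable.fst) Computable.snd).to₂
    refine (ihf.bind inner).of_eq fun p => Part.ext fun x => ?_
    simp only [evalPartial, Seq.seq, Part.map_eq_map, Part.mem_bind_iff,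
      Part.mem_map_iff]
    constructor
    · rintro ⟨a, ha, b, hb, rfl⟩
      exact ⟨_, ⟨a, ha, rfl⟩, b, hb, rfl⟩
    · rintro ⟨_, ⟨a, ha, rfl⟩, b, hb, rfl⟩
      exact ⟨a, ha, b, hb, rfl⟩
  | comp cf cg ihf ihg =>
    exact (ihg.bind (ihf.comp (Computable.fst.comp Computable.fst) Computable.snd).to₂).of_eq
      fun _ => rfl
  | prec cf cg ihf ihg =>
    have hstep : Partrec₂ fun (p : α × ℕ) (q : ℕ × ℕ) =>
        cg.evalPartial (O p.1) (Nat.pair p.2.unpair.1 (Nat.pair q.1 q.2)) :=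
      ihg.comp (Computable.fst.comp Computable.fst) <|
        hpair.comp (hunpair₁.comp Computable.fst) <|
          hpair.comp (Computable.fst.comp Computable.snd) (Computable.snd.comp Computable.snd)
    exact (Partrec.nat_rec hunpair₂ (ihf.comp Computable.fst hunpair₁) hstep).of_eq fun _ => rfl
  | rfind' cf ihf =>
    have hadd : Computable₂ fun (p : α × ℕ) (k : ℕ) => k + p.2.unpair.2 :=
      Primrec.nat_add.to_comp.comp Computable.snd (hunpair₂.comp Computable.fst)
    have hsearch : Partrec₂ fun (p : α × ℕ) (k : ℕ) =>
        (fun x => decide (x = 0)) <$>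
          cf.evalPartial (O p.1) (Nat.pair p.2.unpair.1 (k + p.2.unpair.2)) :=
      (ihf.comp (Computable.fst.comp Computable.fst)
        (hpair.comp (hunpair₁.comp Computable.fst) hadd)).map
        ((Primrec.eq.comp Primrec.snd (Primrec.const 0)).decide.to_comp)
    exact ((Partrec.rfind hsearch).map hadd).of_eq fun _ => rfl

end OracleCode

section Search

open Nat.Partrec Encodable

variable {α β σ : Type*} [Primcodable α] [Primcodable β] [Primcodable σ]

/-- Dovetailing: search simultaneously over all `b` and all step bounds. -/
theorem Partrec.exists_witness_search {f : α → β →. σ} (hf : Partrec₂ f) :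
    ∃ F : α →. β × σ, Partrec F ∧ (∀ a, (F a).Dom ↔ ∃ b, (f a b).Dom) ∧
      ∀ a b x, (b, x) ∈ F a → x ∈ f a b := by
  obtain ⟨e, he⟩ := Code.exists_code.1 hf
  have heval : ∀ a b, e.eval (encode (a, b)) = (f a b).map encode := fun a b => by
    simp [he, encodek]
  let stage (a : α) (k : ℕ) : Option (β × σ) :=
    (decode k.unpair.1 : Option β).bind fun b =>
      ((Code.evaln k.unpair.2 e (encode (a, b))).bind decode).map (b, ·)
  have hstage : Computable₂ stage := by
    refine Primrec.to_comp <| Primrec₂.mk <| Primrec.option_bind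
      (Primrec.decode.comp ((Primrec.fst.comp Primrec.unpair).comp Primrec.snd)) ?_
    have hevaln : Primrec fun p : (α × ℕ) × β =>
        Code.evaln p.1.2.unpair.2 e (encode (p.1.1, p.2)) :=
      Code.primrec_evaln.comp <|
        (((Primrec.snd.comp Primrec.unpair).comp (Primrec.snd.comp Primrec.fst)).pair
          (Primrec.const e)).pair
        (Primrec.encode.comp ((Primrec.fst.comp Primrec.fst).pair Primrec.snd))
    exact Primrec₂.mk <| Primrec.option_map
      (Primrec.option_bind hevaln (Primrec.decode.comp Primrec.snd).to₂)
      (Primrec.pair (Primrec.snd.comp Primrec.fst) Primrec.snd).to₂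
  have sound : ∀ a k b x, (b, x) ∈ stage a k → x ∈ f a b := by
    intro a k b x h
    simp only [stage, Option.mem_def, Option.bind_eq_some_iff, Option.map_eq_some_iff,
      Prod.mk.injEq] at h
    obtain ⟨b, -, y, ⟨z, hz, hyz⟩, rfl, rfl⟩ := h
    have hz := Code.evaln_sound hz
    rw [heval, Part.mem_map_iff] at hz
    obtain ⟨x, hx, rfl⟩ := hz
    rw [encodek, Option.some_inj] at hyz
    exact hyz ▸ hx
  have complete : ∀ a b x, x ∈ f a b → ∃ k, (b, x) ∈ stage a k := by
    intro a b x h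
    obtain ⟨s, hs⟩ := Code.evaln_complete.1 ((heval a b).symm ▸ Part.mem_map encode h)
    refine ⟨Nat.pair (encode b) s, ?_⟩
    simp only [stage, Option.mem_def, Nat.unpair_pair, encodek, Option.bind_some]
    rw [Option.mem_def.1 hs]
    simp [encodek]
  refine ⟨fun a => Nat.rfindOpt (stage a), Partrec.rfindOpt hstage, fun a => ?_,
    fun a b x h => ?_⟩
  · refine Nat.rfindOpt_dom.trans ⟨?_, ?_⟩
    · rintro ⟨k, ⟨b, x⟩, h⟩
      exact ⟨b, Part.dom_iff_mem.2 ⟨x, sound a k b x h⟩⟩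
    · rintro ⟨b, hb⟩
      obtain ⟨k, hk⟩ := complete a b _ (Part.get_mem hb)
      exact ⟨k, _, hk⟩
  · obtain ⟨k, hk⟩ := Nat.rfindOpt_spec h
    exact sound a k b x hk

theorem Partrec.exists_dom_re {f : α → β →. σ} (hf : Partrec₂ f) :
    REPred fun a => ∃ b, (f a b).Dom := by
  obtain ⟨F, hF, hdom, -⟩ := Partrec.exists_witness_search hf
  exact hF.dom_re.of_eq fun a => hdom a

theorem Partrec.exists_computable_witness {f : α → β →. σ} (hf : Partrec₂ f)
    (htot : ∀ a, ∃ b, (f a b).Dom) :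
    ∃ g : α → β × σ, Computable g ∧ ∀ a, (g a).2 ∈ f a (g a).1 := by
  obtain ⟨F, hF, hdom, hsound⟩ := Partrec.exists_witness_search hf
  have hFtot : ∀ a, (F a).Dom := fun a => (hdom a).2 (htot a)
  exact ⟨fun a => (F a).get (hFtot a), hF.of_eq_tot fun a => Part.get_mem _,
    fun a => hsound a _ _ (Part.get_mem _)⟩

end Search

def stringOracle (σ : List Bool) : ℕ →. ℕ := fun n => ((σ[n]?).map Bool.toNat : Option ℕ)

theorem stringOracle_partrec : Partrec₂ stringOracle :=
  (Computable.option_map Primrec.list_getElem?.to_comp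
    ((Primrec.dom_bool Bool.toNat).to_comp.comp Computable.snd).to₂).ofOption

noncomputable def initialSegment (A : Set ℕ) (m : ℕ) : List Bool :=
  (List.range m).map fun i => decide (i ∈ A)

theorem Bool.toNat_eq_chi {b : Bool} {A : Set ℕ} {n : ℕ} (h : b = true ↔ n ∈ A) :
    b.toNat = chi A n := by
  cases b <;> simp_all [chi]

theorem mem_chi_of_mem_stringOracle {A : Set ℕ} {σ : List Bool} (hσ : ExtendsString A σ)
    (k x : ℕ) (hx : x ∈ stringOracle σ k) : x ∈ Part.some (chi A k) := by
  simp only [stringOracle, Part.mem_ofOption, Option.mem_def, Option.map_eq_some_iff,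
    List.getElem?_eq_some_iff] at hx
  obtain ⟨b, ⟨hk, rfl⟩, rfl⟩ := hx
  have := hσ k hk
  cases hb : σ[k] <;> simp_all [chi]

theorem chi_mem_stringOracle_initialSegment (A : Set ℕ) {k m : ℕ} (h : k < m) :
    chi A k ∈ stringOracle (initialSegment A m) k := by
  simp [stringOracle, initialSegment, h, Bool.toNat_eq_chi decide_eq_true_iff]

theorem ExtendsString.prefix_initialSegment {A : Set ℕ} {σ : List Bool}
    (hσ : ExtendsString A σ) {m : ℕ} (hm : σ.length ≤ m) : σ <+: initialSegment A m := by
  rw [List.prefix_iff_eq_take]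
  refine List.ext_getElem (by simp [initialSegment, hm]) fun i h _ => ?_
  have := hσ i h
  simp only [initialSegment, List.getElem_take, List.getElem_map, List.getElem_range]
  cases hb : σ[i] <;> simp_all

def disagreementStrings (c : OracleCode) (φ : ℕ →. Bool) : Set (List Bool) :=
  {σ | ∃ n, ∃ x ∈ c.evalPartial (stringOracle σ) n, ∃ b ∈ φ n, x ≠ b.toNat}

theorem disagreementStrings_re (c : OracleCode) {φ : ℕ →. Bool} (hφ : Partrec φ) :
    REPred (· ∈ disagreementStrings c φ) := by
  let test (σ : List Bool) (n : ℕ) : Part Unit :=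
    (c.evalPartial (stringOracle σ) n).bind fun x => (φ n).bind fun b =>
      ((if x = b.toNat then none else some ()) : Option Unit)
  have hcompare : Computable fun q : ((List Bool × ℕ) × ℕ) × Bool =>
      ((if q.1.2 = q.2.toNat then none else some ()) : Option Unit) :=
    (Primrec.ite (Primrec.eq.comp (Primrec.snd.comp Primrec.fst)
      ((Primrec.dom_bool Bool.toNat).comp Primrec.snd)) (Primrec.const none)
      (Primrec.const (some ()))).to_comp
  have htest : Partrec₂ test :=
    (c.evalPartial_partrec stringOracle_partrec).bind <|
      ((hφ.comp (Computable.snd.comp Computable.fst)).bind hcompare.ofOption.to₂).to₂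
  refine (Partrec.exists_dom_re htest).of_eq fun σ => exists_congr fun n => ?_
  simp only [test, Part.dom_iff_mem, Part.mem_bind_iff, Part.mem_ofOption, Option.mem_def,
    ite_eq_right_iff, reduceCtorEq, imp_false, exists_const, ne_eq]

section Reduction

variable {A B : Set ℕ} {c : OracleCode}

theorem eq_chi_of_mem_evalPartial_stringOracle (hc : ∀ n, c.eval (chi A) n = Part.some (chi B n))
    {σ : List Bool} (hσ : ExtendsString A σ) {n x : ℕ}
    (hx : x ∈ c.evalPartial (stringOracle σ) n) : x = chi B n := by
  have := c.evalPartial_mono (mem_chi_of_mem_stringOracle hσ) n x hx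
  rwa [← OracleCode.eval_eq_evalPartial, hc, Part.mem_some_iff] at this

theorem notMem_disagreementStrings {φ : ℕ →. Bool}
    (hc : ∀ n, c.eval (chi A) n = Part.some (chi B n))
    (hφB : ∀ n b, b ∈ φ n → (b = true ↔ n ∈ B)) {σ : List Bool} (hσ : ExtendsString A σ) :
    σ ∉ disagreementStrings c φ := by
  rintro ⟨n, x, hx, b, hb, hne⟩
  exact hne <| (eq_chi_of_mem_evalPartial_stringOracle hc hσ hx).trans
    (Bool.toNat_eq_chi (hφB n b hb)).symm

theorem eventually_chi_mem_evalPartial_initialSegment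
    (hc : ∀ n, c.eval (chi A) n = Part.some (chi B n)) (n : ℕ) :
    ∀ᶠ m in atTop, chi B n ∈ c.evalPartial (stringOracle (initialSegment A m)) n := by
  refine c.eventually_mem_evalPartial (O := fun k => Part.some (chi A k))
    (fun k x hx => ?_) n _ ?_
  · rw [Part.mem_some_iff.1 hx]
    exact eventually_gt_atTop k |>.mono fun m hm => chi_mem_stringOracle_initialSegment A hm
  · rw [← OracleCode.eval_eq_evalPartial, hc]
    exact Part.mem_some _

theorem exists_computable_convergent_extension (hc : ∀ n, c.eval (chi A) n = Part.some (chi B n))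
    {σ₀ : List Bool} (hσ₀ : ExtendsString A σ₀) :
    ∃ g : ℕ → List Bool × ℕ, Computable g ∧
      ∀ n, (g n).2 ∈ c.evalPartial (stringOracle (σ₀ ++ (g n).1)) n := by
  refine Partrec.exists_computable_witness
    (f := fun n ext => c.evalPartial (stringOracle (σ₀ ++ ext)) n) ?_ fun n => ?_
  · have hO : Partrec₂ fun (ext : List Bool) (k : ℕ) => stringOracle (σ₀ ++ ext) k :=
      stringOracle_partrec.comp
        (Primrec.list_append.comp (Primrec.const σ₀) Primrec.fst).to_comp Computable.snd
    exact (c.evalPartial_partrec hO).comp Computable.snd Computable.fst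
  · obtain ⟨m, hm, hprefix⟩ := ((eventually_chi_mem_evalPartial_initialSegment hc n).and
      (eventually_ge_atTop σ₀.length)).exists
    obtain ⟨ext, hext⟩ := hσ₀.prefix_initialSegment hprefix
    exact ⟨ext, Part.dom_iff_mem.2 ⟨_, hext ▸ hm⟩⟩

end Reduction

theorem partialDensity_nonneg (D : Set ℕ) (n : ℕ) : 0 ≤ partialDensity D n := by
  unfold partialDensity
  positivity

theorem partialDensity_le_one (D : Set ℕ) (n : ℕ) : partialDensity D n ≤ 1 := by
  unfold partialDensity
  rcases Nat.eq_zero_or_pos n with rfl | hn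
  · simp
  · rw [div_le_one (by exact_mod_cast hn)]
    exact_mod_cast (Finset.card_filter_le _ _).trans_eq (Finset.card_range n)

theorem partialDensity_mono {D E : Set ℕ} (h : D ⊆ E) (n : ℕ) :
    partialDensity D n ≤ partialDensity E n := by
  unfold partialDensity
  gcongr

theorem lowerDensity_mono {D E : Set ℕ} (h : D ⊆ E) : lowerDensity D ≤ lowerDensity E :=
  liminf_le_liminf (.of_forall (partialDensity_mono h))
    (isBoundedUnder_of ⟨0, partialDensity_nonneg D⟩)
    (isBoundedUnder_of ⟨1, partialDensity_le_one E⟩).isCoboundedUnder_ge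

theorem coarse_from_partial_below_one_generic_general (A B : Set ℕ) (r : ℝ)
    (hA : OneGeneric A) (hBA : TuringReducibleSet B A)
    (hB : PartiallyComputableAt B r) : CoarselyComputableAt B r := by
  obtain ⟨c, hc⟩ := hBA
  obtain ⟨φ, hφ, hφB, hr⟩ := hB
  obtain ⟨σ₀, hσ₀, havoid⟩ : AvoidsStrings A (disagreementStrings c φ) :=
    (hA _ (disagreementStrings_re c hφ)).resolve_left fun ⟨_, hσS, hσ⟩ =>
      notMem_disagreementStrings hc hφB hσ hσS
  obtain ⟨g, hg, hgconv⟩ := exists_computable_convergent_extension hc hσ₀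
  have hC : IsComputableSet {n | (g n).2 = 1} :=
    ((Primrec.eq.comp Primrec.id (Primrec.const 1)).decide.to_comp.comp
      (Computable.snd.comp hg)).computablePred
  refine ⟨_, hC, hr.trans (lowerDensity_mono fun n hn => ?_)⟩
  obtain ⟨b, hb⟩ := Part.dom_iff_mem.1 hn
  have hgb : (g n).2 = b.toNat := by
    by_contra hne
    exact havoid _ ⟨n, _, hgconv n, b, hb, hne⟩ (List.prefix_append _ _)
  show n ∈ B ↔ (g n).2 = 1
  rw [hgb, ← hφB n b hb]
  cases b <;> simp

theorem coarse_from_partial_below_one_generic (A B : Set ℕ) (r : ℝ)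
    (hr0 : 0 ≤ r) (hr1 : r ≤ 1) (hA : OneGeneric A) (hBA : TuringReducibleSet B A)
    (hB : PartiallyComputableAt B r) : CoarselyComputableAt B r :=
  coarse_from_partial_below_one_generic_general A B r hA hBA hB
end
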